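/- arXiv:1912.13287 — 2 statements merged into one kernel-verified Lean document; each statement's English description precedes it below -/
import Mathlib

section
/- Let S = (A,B) be an interval sequence, and let R be a sequence with B ≤ R ≤ (n−1,...,n−1) such that (A,R) is realizable and Σ_i (r_i − b_i) is minimum among all such sequences. Then for every graphic sequence D_0 with A ≤ D_0 ≤ R, the deviation δ(D_0,S) equals min{δ(D,S) : D graphic} = Σ_i (r_i − b_i). -/
open Finset

/-- A sequence is graphic if it is the degree sequence of a simple graph. -/
def IsGraphic {n : ℕ} (D : Fin n → ℕ) : Prop :=
  ∃ (G : SimpleGraph (Fin n)) (_ : DecidableRel G.Adj), ∀ i, G.degree i = D i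

/-- The levelling operation: decrement entry `α` by 1, increment entry `β` by 1. -/
def lvl {n : ℕ} (D : Fin n → ℕ) (α β : Fin n) : Fin n → ℕ :=
  fun i => if i = α then D α - 1 else if i = β then D β + 1 else D i

/-- The spread `φ(D) = ∑_{r<s} |d_r - d_s|`. -/
def spread {n : ℕ} (D : Fin n → ℕ) : ℤ :=
  ∑ r : Fin n, ∑ s : Fin n, if r < s then |(D r : ℤ) - (D s : ℤ)| else 0

/-- `A ≤ D ≤ B` coordinatewise. -/
def Between {n : ℕ} (A D B : Fin n → ℕ) : Prop := ∀ i, A i ≤ D i ∧ D i ≤ B i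

/-- Volume of `D` w.r.t. lower boundary `A`. -/
def vol {n : ℕ} (A D : Fin n → ℕ) : ℕ := ∑ i, (D i - A i)

/-- An interval sequence `(A,B)` is realizable if it contains a graphic sequence. -/
def Realizable {n : ℕ} (A B : Fin n → ℕ) : Prop := ∃ D, IsGraphic D ∧ Between A D B

/-- Two sequences are similar if one is a permutation of the other. -/
def SimilarSeq {n : ℕ} (D D' : Fin n → ℕ) : Prop :=
  ∃ σ : Equiv.Perm (Fin n), ∀ i, D' i = D (σ i)

/-- `D` is levelled w.r.t. `(A,B)`: it lies in `[A,B]` and no levelling operation staying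
within `[A,B]` strictly decreases its spread. -/
def IsLevelled {n : ℕ} (A B D : Fin n → ℕ) : Prop :=
  Between A D B ∧ ∀ α β : Fin n, α ≠ β → D β < D α → Between A (lvl D α β) B →
    spread D ≤ spread (lvl D α β)

/-- One levelling step from `D` to `D'` staying within `[A,B]`. -/
def LvlStep {n : ℕ} (A B D D' : Fin n → ℕ) : Prop :=
  ∃ α β : Fin n, α ≠ β ∧ D β < D α ∧ D' = lvl D α β ∧ Between A D' B

/-- `F(ℓ,S) = ∑_i (min(ℓ,b_i) - min(ℓ,a_i))`. -/
noncomputable def Fvol {n : ℕ} (A B : Fin n → ℕ) (ℓ : ℝ) : ℝ :=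
  ∑ i, (min ℓ (B i : ℝ) - min ℓ (A i : ℝ))

/-- Upper deviation `δ_U(D,S) = ∑_i max(0, d_i - b_i)` (truncated subtraction). -/
def devU {n : ℕ} (D B : Fin n → ℕ) : ℕ := ∑ i, (D i - B i)

/-- Lower deviation `δ_L(D,S) = ∑_i max(0, a_i - d_i)` (truncated subtraction). -/
def devL {n : ℕ} (D A : Fin n → ℕ) : ℕ := ∑ i, (A i - D i)

/-- `R` lies in `[B,⊤]`, `(A,R)` is realizable, and `∑ (r_i - b_i)` is minimum. -/
def MinUpper {n : ℕ} (A B R : Fin n → ℕ) : Prop :=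
  (∀ i, B i ≤ R i ∧ R i ≤ n - 1) ∧ Realizable A R ∧
  ∀ R' : Fin n → ℕ, (∀ i, B i ≤ R' i ∧ R' i ≤ n - 1) → Realizable A R' →
    ∑ i, (R i - B i) ≤ ∑ i, (R' i - B i)

/-
If `D` is graphic and some `d_i < a_i`, then `d_i < n - 1`, so `i` has a non-neighbour `u` and
adding the edge `iu` keeps `D` graphic; this lowers `δ_L` by one and raises `δ_U` by at most one
(at `u`, never at `i`, since `d_i < a_i ≤ b_i`). Repeating gives a graphic `E ≥ A` with
`δ_U(E) ≤ δ(D)`. Then `(A, max(B, E))` is realizable, so minimality of `R` gives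
`∑ (r_i - b_i) ≤ δ_U(E) ≤ δ(D)`. Conversely `A ≤ D₀ ≤ R` gives `δ(D₀) = δ_U(D₀) ≤ ∑ (r_i - b_i)`.
-/

namespace SimpleGraph

variable {V : Type*} [Fintype V] [DecidableEq V] (G : SimpleGraph V) [DecidableRel G.Adj]

theorem degree_sup_edge {s t : V} (hst : s ≠ t) (hn : ¬G.Adj s t) (v : V) :
    (G ⊔ edge s t).degree v = G.degree v + if v = s ∨ v = t then 1 else 0 := by
  have hedge : (edge s t).neighborFinset v = if v = s then {t} else if v = t then {s} else ∅ := by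
    ext w
    simp only [mem_neighborFinset, edge_adj]
    split_ifs <;> simp <;> grind
  have hsup :
      (G ⊔ edge s t).neighborFinset v = G.neighborFinset v ∪ (edge s t).neighborFinset v := by
    ext; simp
  have hdisj := disjoint_neighborFinset_of_disjoint _ _ v (G.disjoint_edge.mpr hn)
  rw [← card_neighborFinset_eq_degree, ← card_neighborFinset_eq_degree, hsup,
    Finset.card_union_of_disjoint hdisj, hedge]
  split_ifs <;> simp_all

end SimpleGraph

section DegreeSequences

variable {n : ℕ}

theorem IsGraphic.le_sub_one {D : Fin n → ℕ} (hD : IsGraphic D) (i : Fin n) : D i ≤ n - 1 := by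
  obtain ⟨G, _, hG⟩ := hD
  have := G.degree_lt_card_verts i
  rw [hG, Fintype.card_fin] at this
  omega

theorem IsGraphic.exists_add_edge {D : Fin n → ℕ} (hD : IsGraphic D) {i : Fin n}
    (hi : D i < n - 1) :
    ∃ u, u ≠ i ∧ IsGraphic (fun v => D v + if v = i ∨ v = u then 1 else 0) := by
  obtain ⟨G, _, hG⟩ := hD
  have hcompl : 0 < Gᶜ.degree i := by
    rw [G.degree_compl, Fintype.card_fin, hG]
    omega
  obtain ⟨u, hu⟩ := Gᶜ.degree_pos_iff_exists_adj i |>.mp hcompl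
  rw [SimpleGraph.compl_adj] at hu
  exact ⟨u, hu.1.symm, G ⊔ SimpleGraph.edge i u, inferInstance,
    fun v => by rw [G.degree_sup_edge hu.1 hu.2, hG]⟩

theorem devU_mono {D R : Fin n → ℕ} (B : Fin n → ℕ) (h : ∀ i, D i ≤ R i) :
    devU D B ≤ devU R B :=
  Finset.sum_le_sum fun i _ => Nat.sub_le_sub_right (h i) _

theorem devL_eq_zero {A D : Fin n → ℕ} (h : ∀ i, A i ≤ D i) : devL D A = 0 :=
  Finset.sum_eq_zero fun i _ => Nat.sub_eq_zero_of_le (h i)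

theorem IsGraphic.exists_ge_devU_le {A B D : Fin n → ℕ} (hAB : ∀ i, A i ≤ B i)
    (hB : ∀ i, B i ≤ n - 1) (hD : IsGraphic D) :
    ∃ D', IsGraphic D' ∧ (∀ i, A i ≤ D' i) ∧ devU D' B ≤ devU D B + devL D A := by
  induction h : devL D A using Nat.strong_induction_on generalizing D with
  | _ m ih =>
  by_cases hA : ∀ i, A i ≤ D i
  · exact ⟨D, hD, hA, Nat.le_add_right _ _⟩
  push Not at hA
  obtain ⟨i, hi⟩ := hA
  obtain ⟨u, hui, hD'⟩ := hD.exists_add_edge (hi.trans_le ((hAB i).trans (hB i)))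
  set D' : Fin n → ℕ := fun v => D v + if v = i ∨ v = u then 1 else 0
  have hU : devU D' B ≤ devU D B + 1 := calc
    devU D' B ≤ ∑ v, ((D v - B v) + if v = u then 1 else 0) :=
      Finset.sum_le_sum fun v _ => by
        have := hAB v
        simp only [D']
        split_ifs <;> grind
    _ = devU D B + 1 := by rw [Finset.sum_add_distrib, Finset.sum_ite_eq']; simp [devU]
  have hL : devL D' A < devL D A :=
    Finset.sum_lt_sum (fun v _ => Nat.sub_le_sub_left (Nat.le_add_right _ _) _)
      ⟨i, Finset.mem_univ _, by simp only [D', true_or, if_true]; omega⟩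
  obtain ⟨E, hE, hAE, hEU⟩ := ih _ (h ▸ hL) hD' rfl
  exact ⟨E, hE, hAE, by omega⟩

theorem MinUpper.devU_le {A B R : Fin n → ℕ} (hR : MinUpper A B R) (hAB : ∀ i, A i ≤ B i)
    {D : Fin n → ℕ} (hD : IsGraphic D) : devU R B ≤ devU D B + devL D A := by
  obtain ⟨hBR, -, hmin⟩ := hR
  obtain ⟨E, hE, hAE, hEU⟩ :=
    hD.exists_ge_devU_le hAB fun i => (hBR i).1.trans (hBR i).2
  calc devU R B ≤ ∑ i, (max (B i) (E i) - B i) :=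
        hmin _ (fun i => ⟨le_max_left _ _, max_le ((hBR i).1.trans (hBR i).2) (hE.le_sub_one i)⟩)
          ⟨E, hE, fun i => ⟨hAE i, le_max_right _ _⟩⟩
    _ = devU E B := Finset.sum_congr rfl fun i _ => by omega
    _ ≤ devU D B + devL D A := hEU

end DegreeSequences

theorem stmt_13 {n : ℕ} (A B R : Fin n → ℕ)
    (hS : ∀ i, A i ≤ B i ∧ B i ≤ n - 1)
    (hR : MinUpper A B R)
    (D₀ : Fin n → ℕ) (hD₀ : IsGraphic D₀) (hbet : Between A D₀ R) :
    devU D₀ B + devL D₀ A =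
      sInf {v : ℕ | ∃ D : Fin n → ℕ, IsGraphic D ∧ v = devU D B + devL D A} ∧
    devU D₀ B + devL D₀ A = ∑ i, (R i - B i) := by
  have hlower : ∀ D, IsGraphic D → devU R B ≤ devU D B + devL D A :=
    fun _ => hR.devU_le fun i => (hS i).1
  have hD₀R : devU D₀ B + devL D₀ A = devU R B := by
    have := hlower D₀ hD₀
    rw [devL_eq_zero fun i => (hbet i).1] at this ⊢
    exact le_antisymm (devU_mono B fun i => (hbet i).2) (by simpa using this)
  refine ⟨Eq.symm (IsLeast.csInf_eq ⟨⟨D₀, hD₀, rfl⟩, ?_⟩), hD₀R⟩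
  rintro _ ⟨D, hD, rfl⟩
  exact hD₀R ▸ hlower D hD
end

section
/- Let S = (A,B) be an interval sequence and let R be the set of sequences R with B ≤ R ≤ ⊤ such that (A,R) is realizable and Σ_i(r_i − b_i) is minimum. Then R is closed under levelling operations within [B,⊤]: if R ∈ R, r_α > r_β, and π(R,α,β) lies in [B,⊤], then π(R,α,β) ∈ R. In particular, R contains a sequence that is levelled with respect to (B,⊤). -/
open Finset

/-- Two sequences are similar if one is a permutation of the other. -/
def SeqSimilar {n : ℕ} (D D' : Fin n → ℕ) : Prop :=
  ∃ σ : Equiv.Perm (Fin n), ∀ i, D' i = D (σ i)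

/-! If `R` is a minimal upper boundary with graphic witness `D ∈ [A, R]`, minimality forces
`R = max B D` coordinatewise, so `r_α > b_α` gives `d_α = r_α > r_β ≥ d_β`. Levelling `D` at
`α, β` (a transposition of two entries, or an edge switch) yields a graphic witness for
`π(R, α, β)`, which has the same volume. Among the minimal boundaries, one of least spread is
therefore levelled. -/

namespace SimpleGraph

variable {V : Type*} [Fintype V] [DecidableEq V] (G : SimpleGraph V) [DecidableRel G.Adj]

theorem exists_adj_not_adj_of_degree_add_one_lt {a b : V} (h : G.degree b + 1 < G.degree a) :
    ∃ v, G.Adj a v ∧ ¬G.Adj b v ∧ v ≠ b := by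
  have hcard : #(insert b (G.neighborFinset b)) < #(G.neighborFinset a) := by
    simpa using (card_insert_le b (G.neighborFinset b)).trans_lt h
  obtain ⟨v, hv⟩ : (G.neighborFinset a \ insert b (G.neighborFinset b)).Nonempty :=
    card_pos.mp ((Nat.sub_pos_of_lt hcard).trans_le (le_card_sdiff _ _))
  simp only [mem_sdiff, mem_insert, mem_neighborFinset, not_or] at hv
  exact ⟨v, hv.1, hv.2.2, hv.2.1⟩

/-- Replacing the edge `av` by `bv` moves one unit of degree from `a` to `b`. -/
theorem exists_degree_eq_of_switch {a b v : V} (hav : G.Adj a v) (hbv : ¬G.Adj b v)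
    (hvb : v ≠ b) :
    ∃ (G' : SimpleGraph V) (_ : DecidableRel G'.Adj),
      G'.degree a + 1 = G.degree a ∧ G'.degree b = G.degree b + 1 ∧
        ∀ x, x ≠ a → x ≠ b → G'.degree x = G.degree x := by
  classical
  have hab : a ≠ b := by rintro rfl; exact hbv hav
  have hva : v ≠ a := hav.ne.symm
  let G' := G.deleteEdges {s(a, v)} ⊔ edge b v
  have hNa : G'.neighborFinset a = (G.neighborFinset a).erase v := by
    ext y; simp [G', edge_adj]; grind
  have hNb : G'.neighborFinset b = insert v (G.neighborFinset b) := by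
    ext y; simp [G', edge_adj]; grind
  have hNv : G'.neighborFinset v = insert b ((G.neighborFinset v).erase a) := by
    ext y; simp [G', edge_adj]; grind [G.adj_comm]
  have hNx : ∀ x, x ≠ a → x ≠ b → x ≠ v → G'.neighborFinset x = G.neighborFinset x := by
    intro x hxa hxb hxv; ext y; simp [G', edge_adj]; grind
  refine ⟨G', inferInstance, ?_, ?_, fun x hxa hxb => ?_⟩
  · rw [← card_neighborFinset_eq_degree, ← card_neighborFinset_eq_degree, hNa,
      card_erase_add_one (by simpa using hav)]
  · rw [← card_neighborFinset_eq_degree, ← card_neighborFinset_eq_degree, hNb,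
      card_insert_of_notMem (by simpa [adj_comm] using hbv)]
  · rw [← card_neighborFinset_eq_degree, ← card_neighborFinset_eq_degree]
    rcases eq_or_ne x v with rfl | hxv
    · rw [hNv, card_insert_of_notMem (by simp [adj_comm, hbv]),
        card_erase_add_one (by simpa [adj_comm] using hav)]
    · rw [hNx x hxa hxb hxv]

end SimpleGraph

section Levelling

variable {n : ℕ}

@[simp]
theorem lvl_apply_left (D : Fin n → ℕ) (α β : Fin n) : lvl D α β α = D α - 1 := if_pos rfl

@[simp]
theorem lvl_apply_right (D : Fin n → ℕ) {α β : Fin n} (h : α ≠ β) : lvl D α β β = D β + 1 := by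
  simp [lvl, h.symm]

@[simp]
theorem lvl_apply_of_ne (D : Fin n → ℕ) {α β i : Fin n} (hα : i ≠ α) (hβ : i ≠ β) :
    lvl D α β i = D i := by
  simp [lvl, hα, hβ]

theorem lvl_eq_comp_swap {D : Fin n → ℕ} {α β : Fin n} (hne : α ≠ β) (h : D α = D β + 1) :
    lvl D α β = D ∘ Equiv.swap α β := by
  funext i
  rcases eq_or_ne i α with rfl | hα
  · simp [h]
  rcases eq_or_ne i β with rfl | hβ
  · simp [hne, h]
  · simp [hα, hβ, Equiv.swap_apply_of_ne_of_ne]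

theorem IsGraphic.comp_perm {D : Fin n → ℕ} (hD : IsGraphic D) (σ : Equiv.Perm (Fin n)) :
    IsGraphic (D ∘ σ) := by
  obtain ⟨G, _, hdeg⟩ := hD
  classical
  exact ⟨G.comap σ, inferInstance, fun i => by
    rw [Function.comp_apply, ← hdeg, ← (SimpleGraph.Iso.comap σ G).degree_eq i]; rfl⟩

theorem IsGraphic.lvl {D : Fin n → ℕ} {α β : Fin n} (hD : IsGraphic D) (hne : α ≠ β)
    (hlt : D β < D α) : IsGraphic (lvl D α β) := by
  rcases (Nat.succ_le_of_lt hlt).eq_or_lt with h | h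
  · rw [lvl_eq_comp_swap hne h.symm]
    exact hD.comp_perm _
  obtain ⟨G, _, hdeg⟩ := hD
  obtain ⟨v, hαv, hβv, hvβ⟩ :=
    G.exists_adj_not_adj_of_degree_add_one_lt (a := α) (b := β) (by rwa [hdeg, hdeg])
  obtain ⟨G', _, hα, hβ, hx⟩ := G.exists_degree_eq_of_switch hαv hβv hvβ
  refine ⟨G', inferInstance, fun i => ?_⟩
  rcases eq_or_ne i α with rfl | hiα
  · rw [lvl_apply_left, ← hdeg, ← hα, Nat.add_sub_cancel]
  rcases eq_or_ne i β with rfl | hiβ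
  · rw [lvl_apply_right _ hne, hβ, hdeg]
  · rw [lvl_apply_of_ne _ hiα hiβ, hx i hiα hiβ, hdeg]

theorem sum_lvl_tsub {R B : Fin n → ℕ} {α β : Fin n} (hne : α ≠ β) (hα : B α < R α)
    (hβ : B β ≤ R β) : ∑ i, (lvl R α β i - B i) = ∑ i, (R i - B i) := by
  classical
  rw [← sum_erase_add _ _ (mem_univ α), ← sum_erase_add _ _ (mem_univ α),
    ← sum_erase_add _ _ (mem_erase.mpr ⟨hne.symm, mem_univ β⟩),
    ← sum_erase_add _ _ (mem_erase.mpr ⟨hne.symm, mem_univ β⟩),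
    sum_congr rfl fun i hi => by
      rw [lvl_apply_of_ne _ (ne_of_mem_erase (mem_of_mem_erase hi)) (ne_of_mem_erase hi)]]
  simp only [lvl_apply_left, lvl_apply_right _ hne]
  omega

end Levelling

theorem isGraphic_const_sub_one (n : ℕ) : IsGraphic (fun _ : Fin n => n - 1) := by
  classical
  exact ⟨⊤, inferInstance, fun i => by simp⟩

theorem finite_setOf_between {n : ℕ} (A B : Fin n → ℕ) : {D | Between A D B}.Finite :=
  (Set.finite_Icc A B).subset fun _ hD => ⟨fun i => (hD i).1, fun i => (hD i).2⟩

theorem Between.lvl_lvl {n : ℕ} {A D R : Fin n → ℕ} {α β : Fin n} (h : Between A D R)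
    (hne : α ≠ β) (hDα : D α = R α) (hAα : A α < D α) :
    Between A (lvl D α β) (lvl R α β) := by
  intro i
  rcases eq_or_ne i α with rfl | hiα
  · simp only [lvl_apply_left]; omega
  rcases eq_or_ne i β with rfl | hiβ
  · simp only [lvl_apply_right _ hne]; have := h i; omega
  · simpa only [lvl_apply_of_ne _ hiα hiβ] using h i

namespace MinUpper

variable {n : ℕ} {A B R : Fin n → ℕ}

theorem exists_isGraphic_apply_eq (hR : MinUpper A B R) {α : Fin n} (hα : B α < R α) :
    ∃ D, IsGraphic D ∧ Between A D R ∧ D α = R α := by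
  obtain ⟨hRB, ⟨D, hD, hADR⟩, hmin⟩ := hR
  refine ⟨D, hD, hADR, by_contra fun hne => ?_⟩
  have hDα : D α < R α := lt_of_le_of_ne (hADR α).2 hne
  have hcheaper : ∑ i, ((B ⊔ D) i - B i) < ∑ i, (R i - B i) := by
    refine sum_lt_sum (fun i _ => ?_) ⟨α, mem_univ _, ?_⟩
    · have := (hADR i).2; simp only [Pi.sup_apply]; omega
    · simp only [Pi.sup_apply]; omega
  refine hcheaper.not_ge (hmin _ (fun i => ⟨le_sup_left, ?_⟩)
    ⟨D, hD, fun i => ⟨(hADR i).1, le_sup_right⟩⟩)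
  exact sup_le ((hRB i).1.trans (hRB i).2) ((hADR i).2.trans (hRB i).2)

theorem lvl (hAB : A ≤ B) (hR : MinUpper A B R) {α β : Fin n} (hne : α ≠ β) (hlt : R β < R α)
    (hB : Between B (lvl R α β) (fun _ => n - 1)) : MinUpper A B (lvl R α β) := by
  have hBα : B α < R α := by have := (hB α).1; rw [lvl_apply_left] at this; omega
  obtain ⟨D, hD, hADR, hDα⟩ := hR.exists_isGraphic_apply_eq hBα
  have hDβ : D β < D α := hDα ▸ (hADR β).2.trans_lt hlt
  refine ⟨hB, ⟨_, hD.lvl hne hDβ, hADR.lvl_lvl hne hDα (by have : A α ≤ B α := hAB α; omega)⟩,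
    fun R' hR' hAR' => ?_⟩
  rw [sum_lvl_tsub hne hBα (hR.1 β).1]
  exact hR.2.2 R' hR' hAR'

end MinUpper

section

variable {n : ℕ} {A B : Fin n → ℕ}

theorem exists_minUpper (hS : Between A B fun _ => n - 1) : ∃ R, MinUpper A B R := by
  obtain ⟨R, ⟨hRB, hAR⟩, hmin⟩ := Set.exists_min_image
    {R | Between B R (fun _ => n - 1) ∧ Realizable A R} (fun R => ∑ i, (R i - B i))
    ((finite_setOf_between _ _).subset fun _ h => h.1)
    ⟨_, fun i => ⟨(hS i).2, le_rfl⟩, _, isGraphic_const_sub_one n,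
      fun i => ⟨(hS i).1.trans (hS i).2, le_rfl⟩⟩
  exact ⟨R, hRB, hAR, fun R' hR'B hAR' => hmin R' ⟨hR'B, hAR'⟩⟩

theorem exists_minUpper_isLevelled (hS : Between A B fun _ => n - 1) :
    ∃ R, MinUpper A B R ∧ IsLevelled B (fun _ => n - 1) R := by
  obtain ⟨R, hR, hmin⟩ := Set.exists_min_image {R | MinUpper A B R} spread
    ((finite_setOf_between B _).subset fun _ h => h.1) (exists_minUpper hS)
  exact ⟨R, hR, hR.1, fun α β hne hlt hB =>
    hmin _ (hR.lvl (fun i => (hS i).1) hne hlt hB)⟩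

end

theorem stmt_14 {n : ℕ} (A B : Fin n → ℕ)
    (hS : ∀ i, A i ≤ B i ∧ B i ≤ n - 1) :
    (∀ (R : Fin n → ℕ) (α β : Fin n), MinUpper A B R → α ≠ β → R β < R α →
        Between B (lvl R α β) (fun _ => n - 1) → MinUpper A B (lvl R α β)) ∧
    ∃ R : Fin n → ℕ, MinUpper A B R ∧ IsLevelled B (fun _ => n - 1) R :=
  ⟨fun _ _ _ hR => hR.lvl fun i => (hS i).1, exists_minUpper_isLevelled hS⟩
end
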